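/- Define K̃^{(p)}(e^{−r}) for r = (r₁,…,r_p) ∈ ℝ^p as the determinant of the p×p matrix whose (i,j) entry is (d^{2(j−1)}/dλ^{2(j−1)}) K_λ(e^{−r_i}) evaluated at λ = 0, where K_λ is the Macdonald function. Then the function r ↦ K̃^{(p)}(e^{−r}) satisfies (Σ_{k=1}^p ∂²/∂r_k² − Σ_{k=1}^p e^{−2r_k}) K̃^{(p)}(e^{−r}) = 0 and vanishes whenever r_i = r_j for some i ≠ j. -/

import Mathlib

open Real MeasureTheory Matrix

noncomputable section

/-- The Macdonald function `K_λ(x)`. -/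
def macdonaldK (lam x : ℝ) : ℝ :=
  (1 / 2) * (x / 2) ^ lam *
    ∫ t in Set.Ioi (0 : ℝ), Real.exp (-t) * Real.exp (-x ^ 2 / (4 * t)) * t ^ (-1 - lam)

/-- `K̃^{(p)}(e^{−r}) = det ((d^{2(j−1)}/dλ^{2(j−1)}) K_λ(e^{−r_i}) |_{λ=0})`. -/
def Ktilde (p : ℕ) (r : Fin p → ℝ) : ℝ :=
  (Matrix.of fun i j : Fin p =>
    iteratedDeriv (2 * (j : ℕ)) (fun lam => macdonaldK lam (Real.exp (-r i))) 0).det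

namespace KT
open Filter

lemma cosh_ge_sq (u : ℝ) : u ^ 2 / 4 ≤ Real.cosh u := by
  have h1 : Real.exp |u| / 2 ≤ Real.cosh u := by
    rw [← Real.cosh_abs, Real.cosh_eq]
    have := Real.exp_pos (-|u|)
    linarith
  have h2 : 1 + |u| + |u| ^ 2 / 2 ≤ Real.exp |u| := Real.quadratic_le_exp_of_nonneg (abs_nonneg u)
  have h3 : |u| ^ 2 = u ^ 2 := sq_abs u
  nlinarith [abs_nonneg u]

lemma cosh_le_exp_abs (u : ℝ) : Real.cosh u ≤ Real.exp |u| := by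
  rw [← Real.cosh_abs, Real.cosh_eq]
  have h1 : Real.exp (-|u|) ≤ Real.exp |u| := Real.exp_le_exp.2 (by linarith [abs_nonneg u])
  linarith

/-- The master pointwise bound. -/
lemma pt_bound (n : ℕ) (K c : ℝ) (hc : 0 < c) (u : ℝ) :
    |u| ^ n * Real.exp (K * |u|) * Real.exp (-(c * Real.cosh u)) ≤
      (n.factorial * Real.exp (2 * (1 + |K|) ^ 2 / c)) * Real.exp (-(c / 8) * u ^ 2) := by
  have h1 : |u| ^ n ≤ n.factorial * Real.exp |u| := by
    have := Real.pow_div_factorial_le_exp _ (abs_nonneg u) n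
    rw [div_le_iff₀ (by positivity)] at this
    linarith [this]
  have h2 : Real.exp (K * |u|) ≤ Real.exp (|K| * |u|) := by
    apply Real.exp_le_exp.2
    exact mul_le_mul_of_nonneg_right (le_abs_self K) (abs_nonneg u)
  have h3 : Real.exp (-(c * Real.cosh u)) ≤ Real.exp (-(c * (u ^ 2 / 4))) := by
    apply Real.exp_le_exp.2
    have := cosh_ge_sq u
    nlinarith
  have key : (1 + |K|) * |u| ≤ 2 * (1 + |K|) ^ 2 / c + c / 8 * u ^ 2 := by
    rw [div_add' _ _ _ hc.ne', le_div_iff₀ hc]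
    have expand : (4 * (1 + |K|) - c * |u|) ^ 2
        = 16 * (1 + |K|) ^ 2 - 8 * ((1 + |K|) * |u| * c) + c ^ 2 * u ^ 2 := by
      rw [← sq_abs u]; ring
    nlinarith [sq_nonneg (4 * (1 + |K|) - c * |u|), sq_nonneg u, hc.le]
  calc |u| ^ n * Real.exp (K * |u|) * Real.exp (-(c * Real.cosh u))
      ≤ (n.factorial * Real.exp |u|) * Real.exp (|K| * |u|) * Real.exp (-(c * (u ^ 2 / 4))) := by
        apply mul_le_mul (mul_le_mul h1 h2 (by positivity) (by positivity)) h3 (by positivity)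
          (by positivity)
    _ = n.factorial * Real.exp (|u| + |K| * |u| + -(c * (u ^ 2 / 4))) := by
        simp only [mul_assoc, ← Real.exp_add]
    _ ≤ n.factorial * Real.exp (2 * (1 + |K|) ^ 2 / c + -(c / 8) * u ^ 2) := by
        apply mul_le_mul_of_nonneg_left _ (by positivity)
        apply Real.exp_le_exp.2
        nlinarith [key]
    _ = (n.factorial * Real.exp (2 * (1 + |K|) ^ 2 / c)) * Real.exp (-(c / 8) * u ^ 2) := by
        rw [mul_assoc, ← Real.exp_add]

/-- Integrability from a master-form bound. -/
lemma integrable_of_le_master {f : ℝ → ℝ} (hf : AEStronglyMeasurable f volume)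
    (n : ℕ) (K c : ℝ) (hc : 0 < c)
    (hb : ∀ u, |f u| ≤ |u| ^ n * Real.exp (K * |u|) * Real.exp (-(c * Real.cosh u))) :
    Integrable f := by
  apply Integrable.mono'
    (((integrable_exp_neg_mul_sq (show (0:ℝ) < c / 8 by linarith)).const_mul
      (n.factorial * Real.exp (2 * (1 + |K|) ^ 2 / c)))) hf
  refine ae_of_all _ fun u => ?_
  rw [Real.norm_eq_abs]
  exact (hb u).trans (pt_bound n K c hc u)

lemma integrable_master (n : ℕ) (K c : ℝ) (hc : 0 < c) :
    Integrable (fun u : ℝ => |u| ^ n * Real.exp (K * |u|) * Real.exp (-(c * Real.cosh u))) := by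
  refine integrable_of_le_master ?_ n K c hc fun u => by rw [abs_of_nonneg (by positivity)]
  exact (((continuous_abs.pow n).mul ((continuous_const.mul continuous_abs).rexp)).mul
      ((continuous_const.mul Real.continuous_cosh).neg.rexp)).aestronglyMeasurable

lemma tendsto_gauss_atTop (A b : ℝ) (hb : 0 < b) :
    Tendsto (fun u : ℝ => A * Real.exp (-b * u ^ 2)) atTop (nhds 0) := by
  rw [show (0:ℝ) = A * 0 by ring]
  apply Tendsto.const_mul
  have h1 : Tendsto (fun u : ℝ => b * u ^ 2) atTop atTop :=
    (tendsto_pow_atTop two_ne_zero).const_mul_atTop hb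
  have h2 := Real.tendsto_exp_atBot.comp (tendsto_neg_atTop_atBot.comp h1)
  exact h2.congr fun u => by simp [Function.comp, neg_mul]

lemma tendsto_gauss_atBot (A b : ℝ) (hb : 0 < b) :
    Tendsto (fun u : ℝ => A * Real.exp (-b * u ^ 2)) atBot (nhds 0) := by
  have h := (tendsto_gauss_atTop A b hb).comp tendsto_neg_atBot_atTop
  refine h.congr fun u => ?_
  simp [neg_sq]

/-- Limits at ±∞ from a master-form bound. -/
lemma tendsto_of_le_master {f : ℝ → ℝ} (n : ℕ) (K c : ℝ) (hc : 0 < c)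
    (hb : ∀ u, |f u| ≤ |u| ^ n * Real.exp (K * |u|) * Real.exp (-(c * Real.cosh u))) :
    Tendsto f atTop (nhds 0) ∧ Tendsto f atBot (nhds 0) := by
  have hb' : ∀ u, ‖f u‖ ≤ (n.factorial * Real.exp (2 * (1 + |K|) ^ 2 / c)) *
      Real.exp (-(c / 8) * u ^ 2) := fun u => (hb u).trans (pt_bound n K c hc u)
  constructor
  · exact squeeze_zero_norm hb' (tendsto_gauss_atTop _ _ (by linarith))
  · exact squeeze_zero_norm hb' (tendsto_gauss_atBot _ _ (by linarith))

def G (n : ℕ) (lam r : ℝ) : ℝ :=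
  ∫ u : ℝ, (-u) ^ n * Real.exp (-(Real.exp (-r) * Real.cosh u) - lam * u)

lemma range_mul_exp {y : ℝ} (hy : 0 < y) :
    Set.range (fun u : ℝ => y * Real.exp u) = Set.Ioi 0 := by
  ext t
  constructor
  · rintro ⟨u, rfl⟩
    exact mul_pos hy (Real.exp_pos u)
  · intro ht
    refine ⟨Real.log (t / y), ?_⟩
    show y * Real.exp (Real.log (t / y)) = t
    rw [Real.exp_log (by rw [Set.mem_Ioi] at ht; positivity)]
    field_simp

lemma mac_cov (lam x : ℝ) (hx : 0 < x) :
    macdonaldK lam x = (1 / 2) * ∫ u : ℝ, Real.exp (-(x * Real.cosh u) - lam * u) := by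
  have hy : 0 < x / 2 := by linarith
  set y := x / 2 with hy_def
  have hf : ∀ u ∈ (Set.univ : Set ℝ),
      HasDerivWithinAt (fun u : ℝ => y * Real.exp u) (y * Real.exp u) Set.univ u :=
    fun u _ => ((Real.hasDerivAt_exp u).const_mul y).hasDerivWithinAt
  have hinj : Set.InjOn (fun u : ℝ => y * Real.exp u) Set.univ := by
    intro a _ b _ h
    simp only [mul_eq_mul_left_iff, Real.exp_eq_exp] at h
    rcases h with h | h
    · exact h
    · exact absurd h hy.ne'
  have himg : (fun u : ℝ => y * Real.exp u) '' Set.univ = Set.Ioi 0 := by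
    rw [Set.image_univ]; exact range_mul_exp hy
  have cov := integral_image_eq_integral_abs_deriv_smul MeasurableSet.univ hf hinj
    (fun t => Real.exp (-t) * Real.exp (-x ^ 2 / (4 * t)) * t ^ (-1 - lam))
  rw [himg] at cov
  rw [macdonaldK, cov, setIntegral_univ]
  have hpt : ∀ u : ℝ,
      |y * Real.exp u| • (Real.exp (-(y * Real.exp u)) *
          Real.exp (-x ^ 2 / (4 * (y * Real.exp u))) * (y * Real.exp u) ^ (-1 - lam))
        = y ^ (-lam) * Real.exp (-(x * Real.cosh u) - lam * u) := by
    intro u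
    have heu : (0:ℝ) < Real.exp u := Real.exp_pos u
    rw [smul_eq_mul, abs_of_pos (by positivity)]
    have h1 : -x ^ 2 / (4 * (y * Real.exp u)) = -(y * Real.exp (-u)) := by
      rw [Real.exp_neg]
      field_simp [hy_def]
      ring
    have h2 : (y * Real.exp u) ^ (-1 - lam)
        = y ^ (-1 - lam) * Real.exp (u * (-1 - lam)) := by
      rw [Real.mul_rpow hy.le heu.le, Real.exp_mul]
    rw [h1, h2]
    have h3 : y * y ^ (-1 - lam) = y ^ (-lam) := by
      rw [show (-lam) = (-1 - lam) + 1 by ring, Real.rpow_add_one hy.ne']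
      ring
    have h4 : -(y * Real.exp u) + -(y * Real.exp (-u)) = -(x * Real.cosh u) := by
      rw [Real.cosh_eq, hy_def]; ring
    calc y * Real.exp u * (Real.exp (-(y * Real.exp u)) * Real.exp (-(y * Real.exp (-u))) *
            (y ^ (-1 - lam) * Real.exp (u * (-1 - lam))))
        = (y * y ^ (-1 - lam)) * (Real.exp (-(y * Real.exp u)) * Real.exp (-(y * Real.exp (-u)))
            * (Real.exp u * Real.exp (u * (-1 - lam)))) := by ring
      _ = y ^ (-lam) * Real.exp (-(x * Real.cosh u) - lam * u) := by
          rw [h3, ← Real.exp_add, ← Real.exp_add, ← Real.exp_add, ← h4]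
          congr 1
          ring
  simp only [hpt]
  rw [MeasureTheory.integral_const_mul]
  rw [show (1:ℝ)/2 * y ^ lam * (y ^ (-lam) * ∫ u : ℝ, Real.exp (-(x * Real.cosh u) - lam * u))
      = (1/2) * (y ^ lam * y ^ (-lam)) * ∫ u : ℝ, Real.exp (-(x * Real.cosh u) - lam * u) by ring]
  rw [← Real.rpow_add hy]
  simp

lemma macdonaldK_eq_G (lam r : ℝ) : macdonaldK lam (Real.exp (-r)) = (1 / 2) * G 0 lam r := by
  rw [mac_cov lam _ (Real.exp_pos (-r)), G]
  simp

lemma contG (n : ℕ) (lam r : ℝ) :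
    Continuous (fun u : ℝ => (-u) ^ n * Real.exp (-(Real.exp (-r) * Real.cosh u) - lam * u)) := by
  fun_prop

lemma G_integrand_bound (n : ℕ) (lam r : ℝ) {B : ℝ} (hB : |lam| ≤ B) (u : ℝ) :
    |(-u) ^ n * Real.exp (-(Real.exp (-r) * Real.cosh u) - lam * u)|
      ≤ |u| ^ n * Real.exp (B * |u|) * Real.exp (-(Real.exp (-r) * Real.cosh u)) := by
  rw [abs_mul, abs_pow, abs_neg, Real.abs_exp]
  have key : Real.exp (-(Real.exp (-r) * Real.cosh u) - lam * u)
      ≤ Real.exp (B * |u|) * Real.exp (-(Real.exp (-r) * Real.cosh u)) := by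
    rw [← Real.exp_add]
    apply Real.exp_le_exp.2
    have h1 : -(lam * u) ≤ |lam * u| := neg_le_abs _
    have h2 : |lam * u| ≤ B * |u| := by
      rw [abs_mul]
      exact mul_le_mul_of_nonneg_right hB (abs_nonneg u)
    linarith
  calc |u| ^ n * Real.exp (-(Real.exp (-r) * Real.cosh u) - lam * u)
      ≤ |u| ^ n * (Real.exp (B * |u|) * Real.exp (-(Real.exp (-r) * Real.cosh u))) :=
        mul_le_mul_of_nonneg_left key (by positivity)
    _ = |u| ^ n * Real.exp (B * |u|) * Real.exp (-(Real.exp (-r) * Real.cosh u)) := by ring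

lemma integrable_G_integrand (n : ℕ) (lam r : ℝ) :
    Integrable (fun u : ℝ => (-u) ^ n * Real.exp (-(Real.exp (-r) * Real.cosh u) - lam * u)) :=
  integrable_of_le_master (contG n lam r).aestronglyMeasurable n |lam| (Real.exp (-r))
    (Real.exp_pos _) (G_integrand_bound n lam r le_rfl)

lemma hasDerivAt_G (n : ℕ) (r lam₀ : ℝ) :
    HasDerivAt (fun lam => G n lam r) (G (n + 1) lam₀ r) lam₀ := by
  set c := Real.exp (-r) with hc_def
  have hc : 0 < c := Real.exp_pos _
  have key := hasDerivAt_integral_of_dominated_loc_of_deriv_le (μ := volume)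
    (F := fun lam u => (-u) ^ n * Real.exp (-(c * Real.cosh u) - lam * u))
    (F' := fun lam u => (-u) ^ (n + 1) * Real.exp (-(c * Real.cosh u) - lam * u))
    (x₀ := lam₀)
    (bound := fun u => |u| ^ (n + 1) * Real.exp ((|lam₀| + 1) * |u|) * Real.exp (-(c * Real.cosh u)))
    (s := Metric.ball lam₀ 1) (Metric.ball_mem_nhds _ one_pos)
    (Eventually.of_forall fun lam => (contG n lam r).aestronglyMeasurable)
    (integrable_G_integrand n lam₀ r)
    (contG (n + 1) lam₀ r).aestronglyMeasurable
    (ae_of_all _ fun u lam hlam => by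
      rw [Real.norm_eq_abs]
      apply G_integrand_bound (n + 1) lam r _ u
      rw [Metric.mem_ball, Real.dist_eq] at hlam
      calc |lam| = |lam₀ + (lam - lam₀)| := by ring_nf
        _ ≤ |lam₀| + |lam - lam₀| := abs_add_le _ _
        _ ≤ |lam₀| + 1 := by linarith [hlam.le])
    (integrable_of_le_master
      ((((continuous_abs.pow (n+1)).mul ((continuous_const.mul continuous_abs).rexp)).mul
        ((continuous_const.mul Real.continuous_cosh).neg.rexp)).aestronglyMeasurable)
      (n + 1) (|lam₀| + 1) c hc (fun u => by rw [abs_of_nonneg (by positivity)]))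
    (ae_of_all _ fun u lam _ => by
      have h1 : HasDerivAt (fun lam : ℝ => -(c * Real.cosh u) - lam * u) (-u) lam := by
        simpa using ((hasDerivAt_id lam).mul_const u).const_sub (-(c * Real.cosh u))
      have h2 := (h1.exp).const_mul ((-u) ^ n)
      exact h2.congr_deriv (by ring))
  exact key.2

lemma iteratedDeriv_G (m n : ℕ) (r : ℝ) :
    iteratedDeriv m (fun lam => (1 / 2 : ℝ) * G n lam r) 0 = (1 / 2) * G (n + m) 0 r := by
  induction m generalizing n with
  | zero => simp
  | succ m ih =>
    rw [iteratedDeriv_succ']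
    have hd : (deriv fun lam => (1 / 2 : ℝ) * G n lam r) = fun lam => (1 / 2) * G (n + 1) lam r := by
      funext lam
      exact (((hasDerivAt_G n r lam)).const_mul (1 / 2 : ℝ)).deriv
    rw [hd, ih (n + 1)]
    ring_nf

lemma cosh_pos' (u : ℝ) : 0 < Real.cosh u := Real.cosh_pos u

/-- Integrability from a master-form bound with a constant. -/
lemma integrable_of_le_master' {f : ℝ → ℝ} (hf : AEStronglyMeasurable f volume)
    (A : ℝ) (n : ℕ) (K c : ℝ) (hc : 0 < c)
    (hb : ∀ u, |f u| ≤ A * (|u| ^ n * Real.exp (K * |u|) * Real.exp (-(c * Real.cosh u)))) :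
    Integrable f := by
  apply ((integrable_master n K c hc).const_mul A).mono' hf
  refine ae_of_all _ fun u => ?_
  rw [Real.norm_eq_abs]
  exact hb u

def J (n m : ℕ) (r : ℝ) : ℝ :=
  ∫ u : ℝ, (-u) ^ n * (Real.exp (-r) * Real.cosh u) ^ m * Real.exp (-(Real.exp (-r) * Real.cosh u))

lemma bound1 (n m : ℕ) {c cmin cmax : ℝ} (h1 : cmin ≤ c) (h2 : c ≤ cmax) (h0 : 0 < cmin) (u : ℝ) :
    |(-u) ^ n * (c * Real.cosh u) ^ m * Real.exp (-(c * Real.cosh u))|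
      ≤ cmax ^ m * (|u| ^ n * Real.exp ((m : ℝ) * |u|) * Real.exp (-(cmin * Real.cosh u))) := by
  have hch := cosh_pos' u
  have hc : 0 < c := lt_of_lt_of_le h0 h1
  rw [abs_mul, abs_mul, abs_pow, abs_pow, abs_neg, Real.abs_exp,
    abs_of_pos (mul_pos hc hch)]
  have e1 : (c * Real.cosh u) ^ m ≤ cmax ^ m * Real.exp ((m : ℝ) * |u|) := by
    have : c * Real.cosh u ≤ cmax * Real.exp |u| := by
      apply mul_le_mul h2 (cosh_le_exp_abs u) hch.le (le_trans hc.le h2)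
    calc (c * Real.cosh u) ^ m ≤ (cmax * Real.exp |u|) ^ m :=
          pow_le_pow_left₀ (by positivity) this m
      _ = cmax ^ m * Real.exp ((m : ℝ) * |u|) := by
          rw [mul_pow, ← Real.exp_nat_mul]
  have e2 : Real.exp (-(c * Real.cosh u)) ≤ Real.exp (-(cmin * Real.cosh u)) := by
    apply Real.exp_le_exp.2
    nlinarith
  have hcmax : (0:ℝ) < cmax := lt_of_lt_of_le hc h2
  calc |u| ^ n * (c * Real.cosh u) ^ m * Real.exp (-(c * Real.cosh u))
      ≤ |u| ^ n * (cmax ^ m * Real.exp ((m : ℝ) * |u|)) * Real.exp (-(cmin * Real.cosh u)) := by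
        apply mul_le_mul (mul_le_mul_of_nonneg_left e1 (by positivity)) e2 (by positivity)
          (mul_nonneg (by positivity) (mul_nonneg (pow_nonneg hcmax.le m) (by positivity)))
    _ = cmax ^ m * (|u| ^ n * Real.exp ((m : ℝ) * |u|) * Real.exp (-(cmin * Real.cosh u))) := by
        ring

lemma contJ (n m : ℕ) (r : ℝ) :
    Continuous (fun u : ℝ =>
      (-u) ^ n * (Real.exp (-r) * Real.cosh u) ^ m * Real.exp (-(Real.exp (-r) * Real.cosh u))) := by
  fun_prop

lemma integrable_J_integrand (n m : ℕ) (r : ℝ) :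
    Integrable (fun u : ℝ =>
      (-u) ^ n * (Real.exp (-r) * Real.cosh u) ^ m * Real.exp (-(Real.exp (-r) * Real.cosh u))) :=
  integrable_of_le_master' (contJ n m r).aestronglyMeasurable (Real.exp (-r) ^ m) n m
    (Real.exp (-r)) (Real.exp_pos _) (bound1 n m le_rfl le_rfl (Real.exp_pos _))

lemma hasDerivAt_J_integrand (n m : ℕ) (u r : ℝ) :
    HasDerivAt (fun r : ℝ =>
        (-u) ^ n * (Real.exp (-r) * Real.cosh u) ^ m * Real.exp (-(Real.exp (-r) * Real.cosh u)))
      ((-u) ^ n * ((Real.exp (-r) * Real.cosh u) ^ (m + 1)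
          - (m : ℝ) * (Real.exp (-r) * Real.cosh u) ^ m)
        * Real.exp (-(Real.exp (-r) * Real.cosh u))) r := by
  have hs : HasDerivAt (fun r : ℝ => Real.exp (-r) * Real.cosh u)
      (-(Real.exp (-r) * Real.cosh u)) r := by
    have h := ((hasDerivAt_id r).fun_neg.exp).mul_const (Real.cosh u)
    exact h.congr_deriv (by simp)
  cases m with
  | zero =>
    have h1 := ((hs.fun_pow 0).fun_mul (hs.fun_neg.exp)).const_mul ((-u) ^ n)
    convert h1 using 1
    · rfl
    · rfl
    norm_num
    ring
  | succ m =>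
    have h1 := ((hs.fun_pow (m + 1)).fun_mul (hs.fun_neg.exp)).const_mul ((-u) ^ n)
    convert h1 using 1
    · rfl
    · rfl
    · funext y; ring
    · simp only [Nat.add_sub_cancel, Nat.cast_add, Nat.cast_one]
      ring

lemma hasDerivAt_J (n m : ℕ) (r₀ : ℝ) :
    HasDerivAt (fun r => J n m r) (J n (m + 1) r₀ - (m : ℝ) * J n m r₀) r₀ := by
  set cmin := Real.exp (-(r₀ + 1)) with hcmin_def
  set cmax := Real.exp (1 - r₀) with hcmax_def
  have hcmin : 0 < cmin := Real.exp_pos _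
  have hball : ∀ r ∈ Metric.ball r₀ 1, cmin ≤ Real.exp (-r) ∧ Real.exp (-r) ≤ cmax := by
    intro r hr
    rw [Metric.mem_ball, Real.dist_eq, abs_lt] at hr
    constructor
    · apply Real.exp_le_exp.2; linarith
    · apply Real.exp_le_exp.2; linarith
  have key := hasDerivAt_integral_of_dominated_loc_of_deriv_le (μ := volume)
    (F := fun r u => (-u) ^ n * (Real.exp (-r) * Real.cosh u) ^ m
      * Real.exp (-(Real.exp (-r) * Real.cosh u)))
    (F' := fun r u => (-u) ^ n * ((Real.exp (-r) * Real.cosh u) ^ (m + 1)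
      - (m : ℝ) * (Real.exp (-r) * Real.cosh u) ^ m) * Real.exp (-(Real.exp (-r) * Real.cosh u)))
    (x₀ := r₀)
    (bound := fun u => (cmax ^ (m + 1) + (m : ℝ) * cmax ^ m) *
      (|u| ^ n * Real.exp (((m : ℝ) + 1) * |u|) * Real.exp (-(cmin * Real.cosh u))))
    (s := Metric.ball r₀ 1) (Metric.ball_mem_nhds _ one_pos)
    (Eventually.of_forall fun r => (contJ n m r).aestronglyMeasurable)
    (integrable_J_integrand n m r₀)
    (by apply Continuous.aestronglyMeasurable; fun_prop)
    (ae_of_all _ fun u r hr => by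
      obtain ⟨hr1, hr2⟩ := hball r hr
      rw [Real.norm_eq_abs]
      have split : (-u) ^ n * ((Real.exp (-r) * Real.cosh u) ^ (m + 1)
            - (m : ℝ) * (Real.exp (-r) * Real.cosh u) ^ m)
          * Real.exp (-(Real.exp (-r) * Real.cosh u))
          = (-u) ^ n * (Real.exp (-r) * Real.cosh u) ^ (m + 1)
              * Real.exp (-(Real.exp (-r) * Real.cosh u))
            - (m : ℝ) * ((-u) ^ n * (Real.exp (-r) * Real.cosh u) ^ m
              * Real.exp (-(Real.exp (-r) * Real.cosh u))) := by ring
      rw [split]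
      have b1 := bound1 n (m + 1) hr1 hr2 hcmin u
      have b2 := bound1 n m hr1 hr2 hcmin u
      have hmono : Real.exp ((m : ℝ) * |u|) ≤ Real.exp (((m : ℝ) + 1) * |u|) := by
        apply Real.exp_le_exp.2
        have := abs_nonneg u
        nlinarith
      have b1' : |(-u) ^ n * (Real.exp (-r) * Real.cosh u) ^ (m + 1)
            * Real.exp (-(Real.exp (-r) * Real.cosh u))|
          ≤ cmax ^ (m + 1) * (|u| ^ n * Real.exp (((m : ℝ) + 1) * |u|)
            * Real.exp (-(cmin * Real.cosh u))) := by
        refine b1.trans_eq ?_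
        push_cast
        ring
      have b2' : |(m : ℝ) * ((-u) ^ n * (Real.exp (-r) * Real.cosh u) ^ m
            * Real.exp (-(Real.exp (-r) * Real.cosh u)))|
          ≤ (m : ℝ) * (cmax ^ m * (|u| ^ n * Real.exp (((m : ℝ) + 1) * |u|)
            * Real.exp (-(cmin * Real.cosh u)))) := by
        rw [abs_mul, Nat.abs_cast]
        apply mul_le_mul_of_nonneg_left _ (Nat.cast_nonneg m)
        refine b2.trans ?_
        apply mul_le_mul_of_nonneg_left _ (by positivity)
        apply mul_le_mul_of_nonneg_right _ (by positivity)
        exact mul_le_mul_of_nonneg_left hmono (by positivity)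
      calc |(-u) ^ n * (Real.exp (-r) * Real.cosh u) ^ (m + 1)
            * Real.exp (-(Real.exp (-r) * Real.cosh u))
            - (m : ℝ) * ((-u) ^ n * (Real.exp (-r) * Real.cosh u) ^ m
              * Real.exp (-(Real.exp (-r) * Real.cosh u)))|
          ≤ |(-u) ^ n * (Real.exp (-r) * Real.cosh u) ^ (m + 1)
              * Real.exp (-(Real.exp (-r) * Real.cosh u))|
            + |(m : ℝ) * ((-u) ^ n * (Real.exp (-r) * Real.cosh u) ^ m
              * Real.exp (-(Real.exp (-r) * Real.cosh u)))| := abs_sub _ _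
        _ ≤ (cmax ^ (m + 1) + (m : ℝ) * cmax ^ m) *
            (|u| ^ n * Real.exp (((m : ℝ) + 1) * |u|) * Real.exp (-(cmin * Real.cosh u))) := by
            nlinarith [b1', b2'])
    (((integrable_master n ((m : ℝ) + 1) cmin hcmin).const_mul _))
    (ae_of_all _ fun u r _ => hasDerivAt_J_integrand n m u r)
  have h2 := key.2
  have hint : (∫ u : ℝ, (-u) ^ n * ((Real.exp (-r₀) * Real.cosh u) ^ (m + 1)
      - (m : ℝ) * (Real.exp (-r₀) * Real.cosh u) ^ m) * Real.exp (-(Real.exp (-r₀) * Real.cosh u)))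
      = J n (m + 1) r₀ - (m : ℝ) * J n m r₀ := by
    rw [show (fun u : ℝ => (-u) ^ n * ((Real.exp (-r₀) * Real.cosh u) ^ (m + 1)
        - (m : ℝ) * (Real.exp (-r₀) * Real.cosh u) ^ m)
        * Real.exp (-(Real.exp (-r₀) * Real.cosh u)))
      = fun u : ℝ => ((-u) ^ n * (Real.exp (-r₀) * Real.cosh u) ^ (m + 1)
          * Real.exp (-(Real.exp (-r₀) * Real.cosh u)))
        - (m : ℝ) * ((-u) ^ n * (Real.exp (-r₀) * Real.cosh u) ^ m
          * Real.exp (-(Real.exp (-r₀) * Real.cosh u))) from funext fun u => by ring]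
    rw [integral_sub (integrable_J_integrand n (m + 1) r₀)
      ((integrable_J_integrand n m r₀).const_mul _), MeasureTheory.integral_const_mul]
    rfl
  rw [hint] at h2
  exact h2

lemma tendsto_of_le_master' {f : ℝ → ℝ} (A : ℝ) (n : ℕ) (K c : ℝ) (hc : 0 < c)
    (hb : ∀ u, |f u| ≤ A * (|u| ^ n * Real.exp (K * |u|) * Real.exp (-(c * Real.cosh u)))) :
    Tendsto f atTop (nhds 0) ∧ Tendsto f atBot (nhds 0) := by
  have hA : 0 ≤ A := by
    have h1 := (abs_nonneg (f 1)).trans (hb 1)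
    have hp : (0:ℝ) < |(1:ℝ)| ^ n * Real.exp (K * |(1:ℝ)|) * Real.exp (-(c * Real.cosh 1)) := by
      rw [abs_one]; positivity
    nlinarith
  have hb' : ∀ u, ‖f u‖ ≤ (A * (n.factorial * Real.exp (2 * (1 + |K|) ^ 2 / c)))
      * Real.exp (-(c / 8) * u ^ 2) := by
    intro u
    rw [Real.norm_eq_abs, mul_assoc]
    exact (hb u).trans (mul_le_mul_of_nonneg_left (pt_bound n K c hc u) hA)
  exact ⟨squeeze_zero_norm hb' (tendsto_gauss_atTop _ _ (by linarith)),
    squeeze_zero_norm hb' (tendsto_gauss_atBot _ _ (by linarith))⟩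

lemma sinh_sq_le (u : ℝ) : Real.sinh u ^ 2 ≤ Real.exp |u| ^ 2 := by
  have h1 : Real.sinh u ^ 2 = Real.cosh u ^ 2 - 1 := by
    have := Real.cosh_sq_sub_sinh_sq u; linarith
  have h2 : Real.cosh u ^ 2 ≤ Real.exp |u| ^ 2 :=
    pow_le_pow_left₀ (Real.cosh_pos u).le (cosh_le_exp_abs u) 2
  linarith

/-- `∫ W = 0` for `W` the derivative of a function vanishing at `±∞`. -/
lemma integral_deriv_zero {w W : ℝ → ℝ} (hderiv : ∀ u, HasDerivAt w (W u) u)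
    (hint : Integrable W) (htop : Tendsto w atTop (nhds 0))
    (hbot : Tendsto w atBot (nhds 0)) : ∫ u : ℝ, W u = 0 := by
  have h1 : ∫ u in Set.Iic (0:ℝ), W u = w 0 - 0 :=
    integral_Iic_of_hasDerivAt_of_tendsto (hderiv 0).continuousAt.continuousWithinAt
      (fun x _ => hderiv x) hint.integrableOn hbot
  have h2 : ∫ u in Set.Ioi (0:ℝ), W u = 0 - w 0 :=
    integral_Ioi_of_hasDerivAt_of_tendsto (hderiv 0).continuousAt.continuousWithinAt
      (fun x _ => hderiv x) hint.integrableOn htop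
  have h3 := MeasureTheory.integral_add_compl (measurableSet_Iic (a := (0:ℝ))) hint
  rw [Set.compl_Iic] at h3
  rw [← h3, h1, h2]
  ring

section OneR
variable (r : ℝ)

local notation "cc" => Real.exp (-r)

lemma hd_h : ∀ u : ℝ, HasDerivAt (fun u => Real.exp (-(cc * Real.cosh u)))
    (-(cc * Real.sinh u) * Real.exp (-(cc * Real.cosh u))) u := by
  intro u
  have h := (((Real.hasDerivAt_cosh u).const_mul cc).fun_neg).exp
  convert h using 1
  ring

lemma hd_h1 : ∀ u : ℝ, HasDerivAt
    (fun u => -(cc * Real.sinh u) * Real.exp (-(cc * Real.cosh u)))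
    (((cc * Real.sinh u) ^ 2 - cc * Real.cosh u) * Real.exp (-(cc * Real.cosh u))) u := by
  intro u
  have h := (((Real.hasDerivAt_sinh u).const_mul cc).fun_neg).fun_mul (hd_h r u)
  exact h.congr_deriv (by ring)

lemma bound_pow_h1 (j : ℕ) (u : ℝ) :
    |(-u) ^ j * (-(cc * Real.sinh u) * Real.exp (-(cc * Real.cosh u)))|
      ≤ cc * (|u| ^ j * Real.exp (1 * |u|) * Real.exp (-(cc * Real.cosh u))) := by
  have hc : (0:ℝ) < cc := Real.exp_pos _
  have hs : |Real.sinh u| ≤ Real.exp (1 * |u|) := by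
    rw [one_mul]
    have h1 := sinh_sq_le u
    have h2 : (0:ℝ) < Real.exp |u| := Real.exp_pos _
    rw [← sq_abs (Real.sinh u)] at h1
    nlinarith [abs_nonneg (Real.sinh u)]
  have habs : |(-u) ^ j * (-(cc * Real.sinh u) * Real.exp (-(cc * Real.cosh u)))|
      = |u| ^ j * (cc * |Real.sinh u|) * Real.exp (-(cc * Real.cosh u)) := by
    simp only [abs_mul, abs_neg, abs_pow, Real.abs_exp, abs_of_pos hc]
    ring
  rw [habs]
  calc |u| ^ j * (cc * |Real.sinh u|) * Real.exp (-(cc * Real.cosh u))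
      ≤ |u| ^ j * (cc * Real.exp (1 * |u|)) * Real.exp (-(cc * Real.cosh u)) := by
        apply mul_le_mul_of_nonneg_right
          (mul_le_mul_of_nonneg_left (mul_le_mul_of_nonneg_left hs hc.le) (by positivity))
          (by positivity)
    _ = cc * (|u| ^ j * Real.exp (1 * |u|) * Real.exp (-(cc * Real.cosh u))) := by ring

lemma bound_pow_h (j : ℕ) (C : ℝ) (hC : 0 ≤ C) (u : ℝ) :
    |C * (-u) ^ j * Real.exp (-(cc * Real.cosh u))|
      ≤ C * (|u| ^ j * Real.exp (1 * |u|) * Real.exp (-(cc * Real.cosh u))) := by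
  have h1E : (1:ℝ) ≤ Real.exp (1 * |u|) :=
    Real.one_le_exp (by positivity)
  have habs : |C * (-u) ^ j * Real.exp (-(cc * Real.cosh u))|
      = C * (|u| ^ j * Real.exp (-(cc * Real.cosh u))) := by
    simp only [abs_mul, abs_neg, abs_pow, Real.abs_exp, abs_of_nonneg hC]
    ring
  rw [habs]
  apply mul_le_mul_of_nonneg_left _ hC
  calc |u| ^ j * Real.exp (-(cc * Real.cosh u))
      = |u| ^ j * (1 * Real.exp (-(cc * Real.cosh u))) := by ring
    _ ≤ |u| ^ j * (Real.exp (1 * |u|) * Real.exp (-(cc * Real.cosh u))) := by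
        apply mul_le_mul_of_nonneg_left
          (mul_le_mul_of_nonneg_right h1E (by positivity)) (by positivity)
    _ = |u| ^ j * Real.exp (1 * |u|) * Real.exp (-(cc * Real.cosh u)) := by ring

lemma integrable_f1 (n : ℕ) : Integrable (fun u : ℝ =>
    (-u) ^ n * (((cc * Real.sinh u) ^ 2 - cc * Real.cosh u)
      * Real.exp (-(cc * Real.cosh u)))) := by
  have hc : (0:ℝ) < cc := Real.exp_pos _
  apply integrable_of_le_master' (by apply Continuous.aestronglyMeasurable; fun_prop)
    (cc ^ 2 + cc) n 2 cc hc
  intro u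
  have hch := Real.cosh_pos u
  have he : (0:ℝ) < Real.exp |u| := Real.exp_pos _
  have hb1 : |((cc * Real.sinh u) ^ 2 - cc * Real.cosh u)|
      ≤ (cc ^ 2 + cc) * Real.exp (2 * |u|) := by
    have e1 : (cc * Real.sinh u) ^ 2 ≤ cc ^ 2 * Real.exp (2 * |u|) := by
      have := sinh_sq_le u
      have h2 : Real.exp |u| ^ 2 = Real.exp (2 * |u|) := by
        rw [← Real.exp_nat_mul]; norm_num
      nlinarith [sq_nonneg cc, Real.exp_pos (-r)]
    have e2 : cc * Real.cosh u ≤ cc * Real.exp (2 * |u|) := by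
      have h3 : Real.exp |u| ≤ Real.exp (2 * |u|) :=
        Real.exp_le_exp.2 (by have := abs_nonneg u; linarith)
      have := cosh_le_exp_abs u
      nlinarith
    have e3 : 0 ≤ cc * Real.cosh u := by positivity
    rw [abs_sub_comm]
    rw [abs_le]
    constructor
    · nlinarith [sq_nonneg (cc * Real.sinh u)]
    · nlinarith [sq_nonneg (cc * Real.sinh u)]
  calc |(-u) ^ n * (((cc * Real.sinh u) ^ 2 - cc * Real.cosh u)
        * Real.exp (-(cc * Real.cosh u)))|
      = |u| ^ n * |((cc * Real.sinh u) ^ 2 - cc * Real.cosh u)|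
        * Real.exp (-(cc * Real.cosh u)) := by
        rw [abs_mul, abs_mul, abs_pow, abs_neg, Real.abs_exp, mul_assoc]
    _ ≤ |u| ^ n * ((cc ^ 2 + cc) * Real.exp (2 * |u|)) * Real.exp (-(cc * Real.cosh u)) := by
        apply mul_le_mul_of_nonneg_right (mul_le_mul_of_nonneg_left hb1 (by positivity))
          (by positivity)
    _ = (cc ^ 2 + cc) * (|u| ^ n * Real.exp (2 * |u|) * Real.exp (-(cc * Real.cosh u))) := by
        ring

lemma integrable_f2 (n : ℕ) :
    Integrable (fun u : ℝ => (-u) ^ n * Real.exp (-(cc * Real.cosh u))) := by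
  have h := integrable_J_integrand n 0 r
  simpa using h

lemma ibp_succ (k : ℕ) :
    ∫ u : ℝ, (-u) ^ (k + 2) * (((cc * Real.sinh u) ^ 2 - cc * Real.cosh u)
        * Real.exp (-(cc * Real.cosh u)))
      = (((k:ℝ) + 2) * ((k:ℝ) + 1)) * ∫ u : ℝ, (-u) ^ k * Real.exp (-(cc * Real.cosh u)) := by
  have hc : (0:ℝ) < cc := Real.exp_pos _
  set h : ℝ → ℝ := fun u => Real.exp (-(cc * Real.cosh u)) with h_def
  set h1 : ℝ → ℝ := fun u => -(cc * Real.sinh u) * Real.exp (-(cc * Real.cosh u)) with h1_def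
  set w : ℝ → ℝ := fun u => (-u) ^ (k + 2) * h1 u + ((k:ℝ) + 2) * (-u) ^ (k + 1) * h u
    with w_def
  set W : ℝ → ℝ := fun u => (-u) ^ (k + 2) * (((cc * Real.sinh u) ^ 2 - cc * Real.cosh u) * h u)
    - (((k:ℝ) + 2) * ((k:ℝ) + 1)) * ((-u) ^ k * h u) with W_def
  have hpow : ∀ (j : ℕ) (u : ℝ), HasDerivAt (fun u : ℝ => (-u) ^ (j + 1))
      (-(((j:ℝ) + 1) * (-u) ^ j)) u := by
    intro j u
    have := ((hasDerivAt_id u).fun_neg).fun_pow (j + 1)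
    refine this.congr_deriv ?_
    simp only [Nat.add_sub_cancel, id_eq]
    push_cast
    ring
  have hderiv : ∀ u, HasDerivAt w (W u) u := by
    intro u
    have t1 := ((hpow (k + 1) u).fun_mul (hd_h1 r u))
    have t2 := (((hpow k u).fun_mul (hd_h r u)).const_mul ((k:ℝ) + 2))
    have := t1.fun_add t2
    convert this using 1
    · rfl
    · rfl
    all_goals simp only [w_def, W_def, h_def, h1_def]
    all_goals push_cast
    all_goals first
      | (funext x; ring)
      | ring
  have hWint : Integrable W := by
    apply Integrable.sub (integrable_f1 r (k + 2))
    exact ((integrable_f2 r k).const_mul _)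
  have htends : Tendsto w atTop (nhds 0) ∧ Tendsto w atBot (nhds 0) := by
    have hA : ∀ u, |(-u) ^ (k + 2) * h1 u|
        ≤ cc * (|u| ^ (k + 2) * Real.exp (1 * |u|) * Real.exp (-(cc * Real.cosh u))) := by
      intro u
      rw [h1_def]
      exact bound_pow_h1 r (k + 2) u
    have hB : ∀ u, |((k:ℝ) + 2) * (-u) ^ (k + 1) * h u|
        ≤ ((k:ℝ) + 2) * (|u| ^ (k + 1) * Real.exp (1 * |u|)
          * Real.exp (-(cc * Real.cosh u))) := by
      intro u
      rw [h_def]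
      exact bound_pow_h r (k + 1) ((k:ℝ) + 2) (by positivity) u
    have tA := tendsto_of_le_master' cc (k + 2) 1 cc hc hA
    have tB := tendsto_of_le_master' ((k:ℝ) + 2) (k + 1) 1 cc hc hB
    constructor
    · have := (tA.1).add (tB.1)
      simpa [w_def] using this
    · have := (tA.2).add (tB.2)
      simpa [w_def] using this
  have hzero : ∫ u : ℝ, W u = 0 :=
    integral_deriv_zero hderiv hWint htends.1 htends.2
  have hsplit : ∫ u : ℝ, W u
      = (∫ u : ℝ, (-u) ^ (k + 2) * (((cc * Real.sinh u) ^ 2 - cc * Real.cosh u) * h u))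
        - (((k:ℝ) + 2) * ((k:ℝ) + 1)) * (∫ u : ℝ, (-u) ^ k * h u) := by
    rw [W_def]
    rw [integral_sub (by simpa [h_def, mul_assoc] using integrable_f1 r (k + 2))
      ((integrable_f2 r k).const_mul _)]
    rw [MeasureTheory.integral_const_mul]
  rw [hsplit] at hzero
  linarith [hzero]

lemma ibp_zero :
    ∫ u : ℝ, ((cc * Real.sinh u) ^ 2 - cc * Real.cosh u) * Real.exp (-(cc * Real.cosh u)) = 0 := by
  have hc : (0:ℝ) < cc := Real.exp_pos _
  have hA : ∀ u : ℝ, |-(cc * Real.sinh u) * Real.exp (-(cc * Real.cosh u))|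
      ≤ cc * (|u| ^ 0 * Real.exp (1 * |u|) * Real.exp (-(cc * Real.cosh u))) := by
    intro u
    have := bound_pow_h1 r 0 u
    simpa using this
  have ht := tendsto_of_le_master' cc 0 1 cc hc hA
  apply integral_deriv_zero (w := fun u => -(cc * Real.sinh u) * Real.exp (-(cc * Real.cosh u)))
    (hd_h1 r)
  · have := integrable_f1 r 0
    simpa using this
  · exact ht.1
  · exact ht.2

end OneR

section JODE
variable (r : ℝ)

lemma J_sub_eq (n : ℕ) :
    J n 2 r - J n 1 r - Real.exp (-(2 * r)) * J n 0 r
      = ∫ u : ℝ, (-u) ^ n * (((Real.exp (-r) * Real.sinh u) ^ 2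
          - Real.exp (-r) * Real.cosh u) * Real.exp (-(Real.exp (-r) * Real.cosh u))) := by
  have hsq : Real.exp (-(2 * r)) = Real.exp (-r) ^ 2 := by
    rw [← Real.exp_nat_mul]
    norm_num
  have h2 := integrable_J_integrand n 2 r
  have h1 := integrable_J_integrand n 1 r
  have h0 := integrable_J_integrand n 0 r
  have e1 : ∫ u : ℝ, (((-u) ^ n * (Real.exp (-r) * Real.cosh u) ^ 2
        * Real.exp (-(Real.exp (-r) * Real.cosh u))
      - (-u) ^ n * (Real.exp (-r) * Real.cosh u) ^ 1
        * Real.exp (-(Real.exp (-r) * Real.cosh u)))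
      - Real.exp (-r) ^ 2 * ((-u) ^ n * (Real.exp (-r) * Real.cosh u) ^ 0
        * Real.exp (-(Real.exp (-r) * Real.cosh u))))
      = (J n 2 r - J n 1 r) - Real.exp (-r) ^ 2 * J n 0 r := by
    have h21 : Integrable (fun u : ℝ => (-u) ^ n * (Real.exp (-r) * Real.cosh u) ^ 2
        * Real.exp (-(Real.exp (-r) * Real.cosh u))
      - (-u) ^ n * (Real.exp (-r) * Real.cosh u) ^ 1
        * Real.exp (-(Real.exp (-r) * Real.cosh u))) := h2.sub h1
    have h0' : Integrable (fun u : ℝ => Real.exp (-r) ^ 2 * ((-u) ^ n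
        * (Real.exp (-r) * Real.cosh u) ^ 0
        * Real.exp (-(Real.exp (-r) * Real.cosh u)))) := h0.const_mul _
    rw [integral_sub h21 h0', integral_sub h2 h1, MeasureTheory.integral_const_mul]
    rfl
  have hpt : (fun u : ℝ => (((-u) ^ n * (Real.exp (-r) * Real.cosh u) ^ 2
        * Real.exp (-(Real.exp (-r) * Real.cosh u))
      - (-u) ^ n * (Real.exp (-r) * Real.cosh u) ^ 1
        * Real.exp (-(Real.exp (-r) * Real.cosh u)))
      - Real.exp (-r) ^ 2 * ((-u) ^ n * (Real.exp (-r) * Real.cosh u) ^ 0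
        * Real.exp (-(Real.exp (-r) * Real.cosh u)))))
      = fun u : ℝ => (-u) ^ n * (((Real.exp (-r) * Real.sinh u) ^ 2
          - Real.exp (-r) * Real.cosh u) * Real.exp (-(Real.exp (-r) * Real.cosh u))) := by
    funext u
    have hid := Real.cosh_sq_sub_sinh_sq u
    simp only [pow_zero, pow_one, one_mul, mul_one]
    linear_combination ((-u) ^ n * Real.exp (-(Real.exp (-r) * Real.cosh u))
      * Real.exp (-r) ^ 2) * hid
  rw [hsq, ← e1, hpt]

/-- The key ODE for `J`, base case. -/
lemma J_ode_zero : J 0 2 r - J 0 1 r = Real.exp (-(2 * r)) * J 0 0 r := by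
  have h := J_sub_eq r 0
  have h0 := ibp_zero r
  have hpt : (fun u : ℝ => (-u) ^ 0 * (((Real.exp (-r) * Real.sinh u) ^ 2
        - Real.exp (-r) * Real.cosh u) * Real.exp (-(Real.exp (-r) * Real.cosh u))))
      = fun u : ℝ => ((Real.exp (-r) * Real.sinh u) ^ 2
        - Real.exp (-r) * Real.cosh u) * Real.exp (-(Real.exp (-r) * Real.cosh u)) := by
    funext u; simp
  rw [hpt] at h
  rw [h0] at h
  linarith

/-- The key ODE for `J`, inductive case. -/
lemma J_ode_succ (k : ℕ) :
    J (k + 2) 2 r - J (k + 2) 1 r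
      = Real.exp (-(2 * r)) * J (k + 2) 0 r + (((k:ℝ) + 2) * ((k:ℝ) + 1)) * J k 0 r := by
  have h := J_sub_eq r (k + 2)
  have hkey := ibp_succ r k
  have hJk : (∫ u : ℝ, (-u) ^ k * Real.exp (-(Real.exp (-r) * Real.cosh u))) = J k 0 r := by
    rw [J]; congr 1; funext u; simp
  rw [hJk] at hkey
  rw [hkey] at h
  linarith

end JODE

lemma sum_det_updateRow_mul {p : ℕ} (M N : Matrix (Fin p) (Fin p) ℝ) :
    ∑ k, (M.updateRow k ((M * N) k)).det = M.det * N.trace := by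
  have step2 : ∀ k : Fin p, (M * N) k = ∑ m : Fin p, M k m • N m := by
    intro k; funext j
    simp [Matrix.mul_apply, Finset.sum_apply]
  calc ∑ k, (M.updateRow k ((M * N) k)).det
      = ∑ k, ∑ m, M k m * cramer Mᵀ (N m) k := by
        refine Finset.sum_congr rfl fun k _ => ?_
        rw [← cramer_transpose_apply M ((M * N) k) k, step2 k, map_sum (cramer Mᵀ)]
        simp [Finset.sum_apply, smul_eq_mul]
    _ = ∑ m : Fin p, (Mᵀ *ᵥ (cramer Mᵀ (N m))) m := by
        rw [Finset.sum_comm]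
        refine Finset.sum_congr rfl fun m _ => ?_
        simp [Matrix.mulVec, dotProduct, Matrix.transpose_apply]
    _ = ∑ m : Fin p, (Mᵀ.det • N m) m := by
        simp only [Matrix.mulVec_cramer]
    _ = M.det * N.trace := by
        simp [Matrix.trace, Matrix.diag, Matrix.det_transpose, Finset.mul_sum, smul_eq_mul]

/-- The linear map `b ↦ det (A.updateRow k b)`. -/
def detUpd {p : ℕ} (A : Matrix (Fin p) (Fin p) ℝ) (k : Fin p) : (Fin p → ℝ) →L[ℝ] ℝ :=
  LinearMap.toContinuousLinearMap
    { toFun := fun b => (A.updateRow k b).det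
      map_add' := fun u v => Matrix.det_updateRow_add A k u v
      map_smul' := fun c v => Matrix.det_updateRow_smul A k c v }

@[simp] lemma detUpd_apply {p : ℕ} (A : Matrix (Fin p) (Fin p) ℝ) (k : Fin p) (b : Fin p → ℝ) :
    detUpd A k b = (A.updateRow k b).det := rfl


lemma G_eq_J (m : ℕ) (t : ℝ) : G m 0 t = J m 0 t := by
  rw [G, J]
  congr 1
  funext u
  simp

lemma entry_eq (m : ℕ) (t : ℝ) :
    iteratedDeriv m (fun lam => macdonaldK lam (Real.exp (-t))) 0 = (1 / 2 : ℝ) * J m 0 t := by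
  have hfun : (fun lam => macdonaldK lam (Real.exp (-t))) = fun lam => (1 / 2 : ℝ) * G 0 lam t :=
    funext fun lam => macdonaldK_eq_G lam t
  rw [hfun, iteratedDeriv_G m 0 t, Nat.zero_add, G_eq_J]

end KT

/-- `K̃^{(p)}(e^{−r})` is annihilated by the Toda Hamiltonian
`Σ_k ∂²/∂r_k² − Σ_k e^{−2r_k}` and vanishes on the walls `{r_i = r_j}`. -/
theorem Ktilde_toda_ground_state (p : ℕ) :
    (∀ r : Fin p → ℝ,
      ∑ k : Fin p, iteratedDeriv 2 (fun t => Ktilde p (Function.update r k t)) (r k)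
        - (∑ k : Fin p, Real.exp (-2 * r k)) * Ktilde p r = 0) ∧
    (∀ r : Fin p → ℝ, ∀ i j : Fin p, i ≠ j → r i = r j → Ktilde p r = 0) := by
  constructor
  · intro r
    classical
    set A : Matrix (Fin p) (Fin p) ℝ :=
      Matrix.of (fun i j : Fin p => (1 / 2 : ℝ) * KT.J (2 * (j : ℕ)) 0 (r i)) with hA_def
    have hKt : ∀ r' : Fin p → ℝ, Ktilde p r'
        = (Matrix.of fun i j : Fin p => (1 / 2 : ℝ) * KT.J (2 * (j : ℕ)) 0 (r' i)).det := by
      intro r'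
      unfold Ktilde
      congr 1
      ext i j
      simp only [Matrix.of_apply]
      exact KT.entry_eq (2 * (j : ℕ)) (r' i)
    set coeff : Fin p → ℝ := fun j => (((2 * (j : ℕ)) * (2 * (j : ℕ) - 1) : ℕ) : ℝ)
      with hcoeff_def
    set N : Matrix (Fin p) (Fin p) ℝ :=
      Matrix.of (fun m j : Fin p => if (m : ℕ) + 1 = (j : ℕ) then coeff j else 0) with hN_def
    set w : ℝ → Fin p → ℝ := fun t j => (1 / 2 : ℝ) * KT.J (2 * (j : ℕ)) 0 t with hw_def
    set w1 : ℝ → Fin p → ℝ := fun t j => (1 / 2 : ℝ) * KT.J (2 * (j : ℕ)) 1 t with hw1_def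
    set w2 : ℝ → Fin p → ℝ :=
      fun t j => (1 / 2 : ℝ) * (KT.J (2 * (j : ℕ)) 2 t - KT.J (2 * (j : ℕ)) 1 t) with hw2_def
    have hrowA : ∀ k : Fin p, w (r k) = A k := by
      intro k
      funext j
      simp [hw_def, hA_def]
    have hw2_split : ∀ t : ℝ, w2 t = fun j =>
        Real.exp (-(2 * t)) * w t j + coeff j * ((1 / 2 : ℝ) * KT.J (2 * (j : ℕ) - 2) 0 t) := by
      intro t
      funext j
      simp only [hw2_def, hw_def, hcoeff_def]
      rcases Nat.eq_zero_or_pos (j : ℕ) with hj | hj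
      · rw [hj]
        norm_num
        rw [KT.J_ode_zero t]
        ring
      · obtain ⟨m, hm⟩ : ∃ m, (j : ℕ) = m + 1 := ⟨(j : ℕ) - 1, by omega⟩
        have h2 : 2 * (j : ℕ) = 2 * m + 2 := by omega
        rw [h2, KT.J_ode_succ t (2 * m)]
        have e1 : 2 * m + 2 - 2 = 2 * m := by omega
        have e2 : (((2 * m + 2) * (2 * m + 2 - 1) : ℕ) : ℝ)
            = ((2 * m : ℝ) + 2) * ((2 * m : ℝ) + 1) := by
          have h4 : 2 * m + 2 - 1 = 2 * m + 1 := by omega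
          rw [h4]
          push_cast
          ring
        rw [e1, e2]
        push_cast
        ring
    have hAN : ∀ k : Fin p, (fun j => coeff j * ((1 / 2 : ℝ)
        * KT.J (2 * (j : ℕ) - 2) 0 (r k))) = (A * N) k := by
      intro k
      funext j
      have hmul : (A * N) k j = ∑ m : Fin p,
          (if (m : ℕ) + 1 = (j : ℕ) then A k m * coeff j else 0) := by
        rw [Matrix.mul_apply]
        refine Finset.sum_congr rfl fun m _ => ?_
        simp only [hN_def, Matrix.of_apply]
        by_cases h : (m : ℕ) + 1 = (j : ℕ) <;> simp [h]
      rcases Nat.eq_zero_or_pos (j : ℕ) with hj | hj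
      · have hz : (A * N) k j = 0 := by
          rw [hmul]
          apply Finset.sum_eq_zero
          intro m _
          rw [if_neg (by omega)]
        have hcz : coeff j = 0 := by
          simp only [hcoeff_def]
          rw [hj]
          norm_num
        rw [hz, hcz, zero_mul]
      · have hjp : (j : ℕ) - 1 < p := by omega
        set jm : Fin p := ⟨(j : ℕ) - 1, hjp⟩ with hjm_def
        have hcond : ∀ m : Fin p, ((m : ℕ) + 1 = (j : ℕ)) ↔ m = jm := by
          intro m
          rw [Fin.ext_iff]
          simp only [hjm_def]
          omega
        have hsum : (A * N) k j = A k jm * coeff j := by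
          rw [hmul]
          rw [Finset.sum_congr rfl (fun m _ => by rw [if_congr (hcond m) rfl rfl])]
          rw [Finset.sum_ite_eq' Finset.univ jm (fun m => A k m * coeff j)]
          simp
        rw [hsum]
        have hAkjm : A k jm = (1 / 2 : ℝ) * KT.J (2 * (j : ℕ) - 2) 0 (r k) := by
          simp only [hA_def, Matrix.of_apply]
          congr 2
          have hval : (jm : ℕ) = (j : ℕ) - 1 := rfl
          omega
        rw [hAkjm]
        ring
    have main_k : ∀ k : Fin p,
        iteratedDeriv 2 (fun t => Ktilde p (Function.update r k t)) (r k)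
          = Real.exp (-(2 * r k)) * A.det + (A.updateRow k ((A * N) k)).det := by
      intro k
      have hfun : (fun t => Ktilde p (Function.update r k t))
          = fun t => KT.detUpd A k (w t) := by
        funext t
        rw [hKt, KT.detUpd_apply]
        congr 1
        ext i j
        by_cases hik : i = k
        · subst hik
          simp [Matrix.updateRow_self, Function.update_self, hw_def]
        · simp [Matrix.updateRow_ne hik, Function.update_of_ne hik, hA_def]
      have hD1 : ∀ t : ℝ, HasDerivAt (fun t => KT.detUpd A k (w t))
          (KT.detUpd A k (w1 t)) t := by
        intro t
        apply (KT.detUpd A k).hasFDerivAt.comp_hasDerivAt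
        apply hasDerivAt_pi.2
        intro j
        have h := (KT.hasDerivAt_J (2 * (j : ℕ)) 0 t).const_mul (1 / 2 : ℝ)
        simp only [Nat.cast_zero, zero_mul, sub_zero, zero_add] at h
        exact h
      have hD2 : ∀ t : ℝ, HasDerivAt (fun t => KT.detUpd A k (w1 t))
          (KT.detUpd A k (w2 t)) t := by
        intro t
        apply (KT.detUpd A k).hasFDerivAt.comp_hasDerivAt
        apply hasDerivAt_pi.2
        intro j
        have h := (KT.hasDerivAt_J (2 * (j : ℕ)) 1 t).const_mul (1 / 2 : ℝ)
        simp only [Nat.cast_one, one_mul] at h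
        exact h
      have hiter : iteratedDeriv 2 (fun t => KT.detUpd A k (w t)) (r k)
          = KT.detUpd A k (w2 (r k)) := by
        have e2 : iteratedDeriv 2 (fun t => KT.detUpd A k (w t))
            = deriv (deriv (fun t => KT.detUpd A k (w t))) := by
          rw [iteratedDeriv_succ, iteratedDeriv_one]
        rw [e2]
        have e1 : deriv (fun t => KT.detUpd A k (w t)) = fun t => KT.detUpd A k (w1 t) :=
          funext fun t => (hD1 t).deriv
        rw [e1]
        exact (hD2 (r k)).deriv
      rw [hfun, hiter, hw2_split (r k)]
      have hsplit2 : (fun j => Real.exp (-(2 * r k)) * w (r k) j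
            + coeff j * ((1 / 2 : ℝ) * KT.J (2 * (j : ℕ) - 2) 0 (r k)))
          = Real.exp (-(2 * r k)) • (w (r k)) + (A * N) k := by
        funext j
        rw [← hAN k]
        simp [smul_eq_mul]
      rw [hsplit2, map_add, _root_.map_smul]
      rw [KT.detUpd_apply, KT.detUpd_apply, hrowA k, Matrix.updateRow_eq_self]
      simp [smul_eq_mul]
    have htr : N.trace = 0 := by
      rw [Matrix.trace]
      apply Finset.sum_eq_zero
      intro m _
      simp only [Matrix.diag_apply, hN_def, Matrix.of_apply]
      rw [if_neg (by omega)]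
    have hsum := KT.sum_det_updateRow_mul A N
    rw [htr, mul_zero] at hsum
    have hexp : ∀ k : Fin p, Real.exp (-2 * r k) = Real.exp (-(2 * r k)) := by
      intro k
      congr 1
      ring
    calc ∑ k : Fin p, iteratedDeriv 2 (fun t => Ktilde p (Function.update r k t)) (r k)
          - (∑ k : Fin p, Real.exp (-2 * r k)) * Ktilde p r
        = ∑ k : Fin p, (Real.exp (-(2 * r k)) * A.det + (A.updateRow k ((A * N) k)).det)
          - (∑ k : Fin p, Real.exp (-(2 * r k))) * A.det := by
          rw [Finset.sum_congr rfl fun k _ => main_k k,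
            Finset.sum_congr rfl fun k (_ : k ∈ Finset.univ) => hexp k, hKt r, ← hA_def]
      _ = (∑ k : Fin p, Real.exp (-(2 * r k))) * A.det
            + (∑ k : Fin p, (A.updateRow k ((A * N) k)).det)
          - (∑ k : Fin p, Real.exp (-(2 * r k))) * A.det := by
          rw [Finset.sum_add_distrib, ← Finset.sum_mul]
      _ = 0 := by
          rw [hsum]
          ring
  · intro r i j hij hrij
    unfold Ktilde
    apply Matrix.det_zero_of_row_eq hij
    funext j'
    simp only [Matrix.of_apply]
    rw [hrij]

end
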